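/- Let 0 ≤ d < k < ∞ be integers, let 0 ≤ j ≤ k-d, and let λ > 1 be the real number satisfying Σ_{j'=d+1}^{k+1} λ^{-j'} = 1. There exists p ∈ (0,1) such that p^{k-d-i-1}(1-p) = λ^{-(k-i+1)} for all integers 0 ≤ i ≤ j-1, p^{k-d} = λ^{-(k-j+1)}, and p^{k-d-i}(1-p) = λ^{-(k-i+1)} for all integers j+1 ≤ i ≤ k-d, if and only if one of the following holds: (1) j = 0 and k = d+1; (2) j = 1 and k = d+1; (3) j = 1, d = 2 and k = 4; (4) j = k-d and k = 2d+1. (That is, for finite k, symbol sliding SS(j) achieves capacity exactly in these cases.) -/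

import Mathlib

/-!
Write `q = λ⁻¹ ∈ (0, 1)`. Two consecutive equations of the same family, e.g. `p ^ (s + 1) * (1 - p) =
q ^ (t + 1)` and `p ^ s * (1 - p) = q ^ t`, force `p = q`; such a pair exists unless `k = d + 1` or
`(j, k - d) = (1, 2)`. Once `p = q`, the middle equation forces `j = d + 1`, and an equation below `j`
gives `1 - q = q ^ (d + 2)` while one above `j` gives `1 - q = q ^ (d + 1)`, so no index lies above
`j`, i.e. `j = k - d`. The case `(j, k - d) = (1, 2)` is solved by hand: `p = q ^ 2` and `d = 2`.
Conversely, each listed case has an explicit solution (`p = q ^ (d + 2)`, `q ^ (d + 1)`, `q ^ 2`, `q`)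
by the characteristic equation, which after multiplication by `1 - q` reads
`q ^ (d + 1) - q ^ (k + 2) = 1 - q`.
-/

open Finset

lemma sub_pow_eq_one_sub_of_sum_Icc_eq_one {R : Type*} [CommRing R] {q : R} {a b : ℕ}
    (hab : a ≤ b + 1) (h : ∑ i ∈ Icc a b, q ^ i = 1) : q ^ a - q ^ (b + 1) = 1 - q := by
  have := geom_sum_Ico_mul_neg q hab
  rwa [Ico_add_one_right_eq_Icc, h, one_mul, eq_comm] at this

lemma eq_of_pow_succ_mul_eq_pow_succ {K : Type*} [Field K] {p q c : K} {s t : ℕ} (hq : q ≠ 0)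
    (h₁ : p ^ (s + 1) * c = q ^ (t + 1)) (h₀ : p ^ s * c = q ^ t) : p = q := by
  refine mul_right_cancel₀ (pow_ne_zero t hq) ?_
  linear_combination h₁ - p * h₀

/-- `q` stands for `λ⁻¹`: the equations say that the probability of the phrase `0^(k-i)1` under
symbol sliding with index `j` and bias `p` is the maxentropic probability `q ^ (k - i + 1)`. -/
def SlidingMatchesMaxent (d k j : ℕ) (q p : ℝ) : Prop :=
  (∀ i : ℕ, i < j → p ^ (k - d - i - 1) * (1 - p) = q ^ (k - i + 1)) ∧
    p ^ (k - d) = q ^ (k - j + 1) ∧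
    (∀ i : ℕ, j + 1 ≤ i → i ≤ k - d → p ^ (k - d - i) * (1 - p) = q ^ (k - i + 1))

namespace SlidingMatchesMaxent

variable {d k j : ℕ} {q p : ℝ}

lemma eq_of_lower (h : SlidingMatchesMaxent d k j q p) (hq : q ≠ 0) (hj : j ≤ k - d) {i : ℕ}
    (hi : i + 1 < j) : p = q := by
  have h₁ := h.1 i (by omega)
  have h₀ := h.1 (i + 1) hi
  rw [show k - d - i - 1 = k - d - (i + 1) - 1 + 1 by omega,
    show k - i + 1 = k - (i + 1) + 1 + 1 by omega] at h₁
  exact eq_of_pow_succ_mul_eq_pow_succ hq h₁ h₀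

lemma eq_of_upper (h : SlidingMatchesMaxent d k j q p) (hq : q ≠ 0) {i : ℕ} (hi : j + 1 ≤ i)
    (hik : i + 1 ≤ k - d) : p = q := by
  have h₁ := h.2.2 i hi (by omega)
  have h₀ := h.2.2 (i + 1) (by omega) hik
  rw [show k - d - i = k - d - (i + 1) + 1 by omega,
    show k - i + 1 = k - (i + 1) + 1 + 1 by omega] at h₁
  exact eq_of_pow_succ_mul_eq_pow_succ hq h₁ h₀

lemma one_sub_eq_of_lower (h : SlidingMatchesMaxent d k j q q) (hq : q ≠ 0) (hj : j ≤ k - d)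
    {i : ℕ} (hi : i < j) : 1 - q = q ^ (d + 2) := by
  have hi := h.1 i hi
  rw [show k - i + 1 = k - d - i - 1 + (d + 2) by omega, pow_add] at hi
  exact mul_left_cancel₀ (pow_ne_zero _ hq) hi

lemma one_sub_eq_of_upper (h : SlidingMatchesMaxent d k j q q) (hq : q ≠ 0) {i : ℕ}
    (hi : j + 1 ≤ i) (hik : i ≤ k - d) : 1 - q = q ^ (d + 1) := by
  have hi := h.2.2 i hi hik
  rw [show k - i + 1 = k - d - i + (d + 1) by omega, pow_add] at hi
  exact mul_left_cancel₀ (pow_ne_zero _ hq) hi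

lemma index_eq_succ (h : SlidingMatchesMaxent d k j q q) (hq0 : 0 < q) (hq1 : q < 1)
    (hdk : d < k) (hj : j ≤ k - d) : j = d + 1 := by
  have := (pow_right_inj₀ hq0 hq1.ne).1 h.2.1
  omega

lemma d_eq_two (h : SlidingMatchesMaxent d (d + 2) 1 q p) (hq0 : 0 < q) (hq1 : q < 1) :
    d = 2 := by
  obtain ⟨hlow, hmid, hupp⟩ := h
  have h₀ := hlow 0 one_pos
  rw [show d + 2 - d - 0 - 1 = 1 by omega, show d + 2 - 0 + 1 = 2 + (d + 1) by omega, pow_one,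
    pow_add] at h₀
  have h₂ := hupp 2 le_rfl (by omega)
  rw [show d + 2 - d - 2 = 0 by omega, show d + 2 - 2 + 1 = d + 1 by omega, pow_zero,
    one_mul] at h₂
  have hp : p = q ^ 2 := by
    rw [h₂] at h₀
    exact mul_right_cancel₀ (pow_ne_zero _ hq0.ne') h₀
  rw [hp, ← pow_mul, show d + 2 - d = 2 by omega, show d + 2 - 1 + 1 = d + 2 by omega] at hmid
  have := (pow_right_inj₀ hq0 hq1.ne).1 hmid
  omega

theorem capacityCase (h : SlidingMatchesMaxent d k j q p) (hq0 : 0 < q) (hq1 : q < 1)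
    (hdk : d < k) (hj : j ≤ k - d) :
    (j = 0 ∧ k = d + 1) ∨ (j = 1 ∧ k = d + 1) ∨
      (j = 1 ∧ d = 2 ∧ k = 4) ∨ (j = k - d ∧ k = 2 * d + 1) := by
  obtain hk | hk : k = d + 1 ∨ d + 2 ≤ k := by omega
  · omega
  by_cases hsmall : j = 1 ∧ k = d + 2
  · obtain ⟨rfl, rfl⟩ := hsmall
    have := h.d_eq_two hq0 hq1
    omega
  have hpq : p = q := by
    by_cases hup : j + 2 ≤ k - d
    · exact h.eq_of_upper hq0.ne' le_rfl hup
    · exact h.eq_of_lower hq0.ne' hj (i := 0) (by omega)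
  subst hpq
  have hjd := h.index_eq_succ hq0 hq1 hdk hj
  have hjk : j = k - d := by
    by_contra hne
    have := (pow_right_inj₀ hq0 hq1.ne).1 <| (h.one_sub_eq_of_upper hq0.ne' le_rfl (by omega)).symm.trans
      (h.one_sub_eq_of_lower hq0.ne' hj (i := 0) (by omega))
    omega
  omega

end SlidingMatchesMaxent

section Solutions

variable {d : ℕ} {q : ℝ}

lemma slidingMatchesMaxent_zero (h : q ^ (d + 1) + q ^ (d + 2) = 1) :
    SlidingMatchesMaxent d (d + 1) 0 q (q ^ (d + 2)) := by
  refine ⟨fun i hi => absurd hi i.not_lt_zero, ?_, fun i hi hik => ?_⟩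
  · rw [show d + 1 - d = 1 by omega, pow_one, show d + 1 - 0 + 1 = d + 2 by omega]
  · obtain rfl : i = 1 := by omega
    rw [show d + 1 - d - 1 = 0 by omega, show d + 1 - 1 + 1 = d + 1 by omega]
    linear_combination -h

lemma slidingMatchesMaxent_one (h : q ^ (d + 1) + q ^ (d + 2) = 1) :
    SlidingMatchesMaxent d (d + 1) 1 q (q ^ (d + 1)) := by
  refine ⟨fun i hi => ?_, ?_, fun i hi hik => by omega⟩
  · obtain rfl : i = 0 := by omega
    rw [show d + 1 - d - 0 - 1 = 0 by omega, show d + 1 - 0 + 1 = d + 2 by omega]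
    linear_combination -h
  · rw [show d + 1 - d = 1 by omega, pow_one, show d + 1 - 1 + 1 = d + 1 by omega]

lemma slidingMatchesMaxent_two_four (h : q ^ 2 + q ^ 3 = 1) :
    SlidingMatchesMaxent 2 4 1 q (q ^ 2) := by
  refine ⟨fun i hi => ?_, by ring, fun i hi hik => ?_⟩
  · obtain rfl : i = 0 := by omega
    linear_combination (-q ^ 2) * h
  · obtain rfl : i = 2 := by omega
    linear_combination -h

lemma slidingMatchesMaxent_middle (h : q ^ (d + 2) = 1 - q) :
    SlidingMatchesMaxent d (2 * d + 1) (d + 1) q q := by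
  refine ⟨fun i hi => ?_, by congr 1; omega, fun i hi hik => by omega⟩
  rw [show 2 * d + 1 - i + 1 = 2 * d + 1 - d - i - 1 + (d + 2) by omega, pow_add, h]

end Solutions

theorem exists_slidingMatchesMaxent {d k j : ℕ} {q : ℝ} (hq0 : 0 < q) (hq1 : q < 1)
    (hroot : ∑ i ∈ Icc (d + 1) (k + 1), q ^ i = 1)
    (hcase : (j = 0 ∧ k = d + 1) ∨ (j = 1 ∧ k = d + 1) ∨
      (j = 1 ∧ d = 2 ∧ k = 4) ∨ (j = k - d ∧ k = 2 * d + 1)) :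
    ∃ p, 0 < p ∧ p < 1 ∧ SlidingMatchesMaxent d k j q p := by
  have hchar := sub_pow_eq_one_sub_of_sum_Icc_eq_one (by omega) hroot
  have h1q : 1 - q ≠ 0 := sub_ne_zero.2 hq1.ne'
  have hpow {n : ℕ} (hn : n ≠ 0) : q ^ n < 1 := pow_lt_one₀ hq0.le hq1 hn
  rcases hcase with ⟨rfl, rfl⟩ | ⟨rfl, rfl⟩ | ⟨rfl, rfl, rfl⟩ | ⟨hj, rfl⟩
  · have h : q ^ (d + 1) + q ^ (d + 2) = 1 :=
      mul_left_cancel₀ h1q (by linear_combination hchar)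
    exact ⟨_, pow_pos hq0 _, hpow (by omega), slidingMatchesMaxent_zero h⟩
  · have h : q ^ (d + 1) + q ^ (d + 2) = 1 :=
      mul_left_cancel₀ h1q (by linear_combination hchar)
    exact ⟨_, pow_pos hq0 _, hpow (by omega), slidingMatchesMaxent_one h⟩
  · have hfac : (1 - q) * (q ^ 2 + 1) * (q ^ 2 + q ^ 3 - 1) = 0 := by linear_combination hchar
    have h : q ^ 2 + q ^ 3 = 1 := by
      rcases mul_eq_zero.1 hfac with hfac' | hfac'
      · rcases mul_eq_zero.1 hfac' with h0 | h0
        · exact absurd h0 h1q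
        · nlinarith
      · linarith
    exact ⟨_, pow_pos hq0 _, hpow two_ne_zero, slidingMatchesMaxent_two_four h⟩
  · obtain rfl : j = d + 1 := by omega
    have hfac : (1 - q ^ (d + 1)) * (q ^ (d + 2) - (1 - q)) = 0 := by
      rw [show 2 * d + 1 + 1 + 1 = d + 1 + (d + 2) by omega] at hchar
      linear_combination hchar
    have h : q ^ (d + 2) = 1 - q := by
      rcases mul_eq_zero.1 hfac with h0 | h0
      · linarith [hpow (n := d + 1) (by omega)]
      · linarith
    exact ⟨q, hq0, hq1, slidingMatchesMaxent_middle h⟩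

/-- For finite `k`, the symbol sliding SS(j) phrase probability vector matches the
maxentropic vector exactly in the listed cases. -/
theorem stmt_7 (d k j : ℕ) (hdk : d < k) (hj : j ≤ k - d) (lam : ℝ) (hlam : 1 < lam)
    (hroot : ∑ j' ∈ Finset.Icc (d + 1) (k + 1), lam⁻¹ ^ j' = 1) :
    (∃ p : ℝ, 0 < p ∧ p < 1 ∧
      (∀ i : ℕ, i < j → p ^ (k - d - i - 1) * (1 - p) = lam⁻¹ ^ (k - i + 1)) ∧
      p ^ (k - d) = lam⁻¹ ^ (k - j + 1) ∧
      (∀ i : ℕ, j + 1 ≤ i → i ≤ k - d →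
        p ^ (k - d - i) * (1 - p) = lam⁻¹ ^ (k - i + 1))) ↔
    ((j = 0 ∧ k = d + 1) ∨ (j = 1 ∧ k = d + 1) ∨
      (j = 1 ∧ d = 2 ∧ k = 4) ∨ (j = k - d ∧ k = 2 * d + 1)) := by
  have hq0 : 0 < lam⁻¹ := inv_pos.2 (zero_lt_one.trans hlam)
  have hq1 : lam⁻¹ < 1 := inv_lt_one_of_one_lt₀ hlam
  exact ⟨fun ⟨_, _, _, h⟩ => SlidingMatchesMaxent.capacityCase h hq0 hq1 hdk hj,
    exists_slidingMatchesMaxent hq0 hq1 hroot⟩
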